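/- A γ-contraction on the complete metric space of state-indexed outcome distributions (with sup-Wasserstein metric) has a unique fixed point, which equals the law of the discounted feature sum ∑_{t=1}^∞ γ^{t-1} φ(s_t) under the behavior policy started at each state. -/

import Mathlib

/-! The law of the discounted return is a fixed point because the return of a trajectory
started at `s` is `φ s + γ •` (the return of the shifted trajectory), and by the Markov property
the shifted trajectory is distributed as the `κ s`-mixture of the trajectory laws.

Uniqueness goes through characteristic functions rather than a Wasserstein metric. For two
fixed points `q, r` and a dual vector `L`, the gaps `Δ s u = ‖χ_{q s}(u L) - χ_{r s}(u L)‖`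
satisfy `Δ s u ≤ ∑ s', κ s {s'} * Δ s' (γ u)`: the Bellman operator mixes over `κ s`,
rescales the argument by `γ` and multiplies by the unimodular factor `exp (i L (φ s))`.
Iterating drives the argument to `0`, where every gap vanishes and is continuous. -/

open MeasureTheory ENNReal

/-- The unit cube `[0,1]^d`. -/
def unitCube (d : ℕ) : Set (Fin d → ℝ) := {f | ∀ i, f i ∈ Set.Icc (0 : ℝ) 1}

/-- The distributional Bellman operator on state-indexed outcome distributions:
sample `s' ~ κ s`, sample `ψ' ~ p(·|s')`, output `φ(s) + γ ψ'`. -/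
noncomputable def Tdist {S : Type*} [MeasurableSpace S] {d : ℕ}
    (γ : ℝ) (φ : S → Fin d → ℝ) (κ : S → Measure S)
    (p : S → Measure (Fin d → ℝ)) (s : S) : Measure (Fin d → ℝ) :=
  (κ s).bind fun s' => (p s').map fun ψ => φ s + γ • ψ

open Filter Topology Complex Function

namespace MeasureTheory.Measure

variable {α β γ : Type*} [MeasurableSpace α] [MeasurableSpace β] [MeasurableSpace γ]

lemma bind_eq_sum_smul [Fintype α] [MeasurableSingletonClass α] (m : Measure α)
    (ν : α → Measure β) : m.bind ν = ∑ a, m {a} • ν a := by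
  conv_lhs => rw [← m.sum_smul_dirac]
  rw [bind_sum _ _ (measurable_of_countable ν).aemeasurable, sum_fintype]
  simp_rw [bind_smul, dirac_bind (measurable_of_countable ν)]

lemma map_bind {m : Measure α} {ν : α → Measure β} (hν : Measurable ν) {g : β → γ}
    (hg : Measurable g) : (m.bind ν).map g = m.bind fun a => (ν a).map g := by
  ext E hE
  rw [map_apply hg hE, bind_apply (hg hE) hν.aemeasurable,
    bind_apply (f := fun a => (ν a).map g) hE ((measurable_map g hg).comp hν).aemeasurable]
  simp_rw [map_apply hg hE]

end MeasureTheory.Measure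

lemma charFunDual_bind {α E : Type*} [MeasurableSpace α] [Fintype α] [MeasurableSingletonClass α]
    [NormedAddCommGroup E] [NormedSpace ℝ E] [MeasurableSpace E] [BorelSpace E]
    (m : Measure α) [IsFiniteMeasure m] (ν : α → Measure E)
    [∀ a, IsFiniteMeasure (ν a)] (L : StrongDual ℝ E) :
    charFunDual (m.bind ν) L = ∑ a, m.real {a} • charFunDual (ν a) L := by
  have hint : ∀ a, Integrable (fun v => cexp (L v * I)) (m {a} • ν a) := fun a =>
    ((integrable_const (1 : ℂ)).mono (by fun_prop)
      (ae_of_all _ fun v => by simp [norm_exp_ofReal_mul_I])).smul_measure (measure_ne_top _ _)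
  simp_rw [charFunDual_apply, Measure.bind_eq_sum_smul,
    integral_finsetSum_measure fun a _ => hint a, integral_smul_measure, measureReal_def]

lemma nonpos_of_le_sum_mul_comp_smul {ι E : Type*} [Fintype ι] [NormedAddCommGroup E]
    [NormedSpace ℝ E] {f : ι → E → ℝ} {w : ι → ι → ℝ} {c : ℝ} (hc : |c| < 1)
    (hw0 : ∀ i j, 0 ≤ w i j) (hw1 : ∀ i, ∑ j, w i j ≤ 1) (hf : ∀ i, ContinuousAt (f i) 0)
    (hf0 : ∀ i, f i 0 = 0) (h : ∀ i x, f i x ≤ ∑ j, w i j * f j (c • x)) (i : ι) (x : E) :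
    f i x ≤ 0 := by
  set B : E → ℝ := fun y => ∑ j, |f j y|
  have hB : ∀ y, 0 ≤ B y := fun y => Finset.sum_nonneg fun j _ => abs_nonneg _
  have hiter : ∀ n i x, f i x ≤ B (c ^ n • x) := by
    intro n
    induction n with
    | zero =>
      intro i x
      simpa using (le_abs_self _).trans
        (Finset.single_le_sum (fun j _ => abs_nonneg (f j x)) (Finset.mem_univ i))
    | succ n ih =>
      intro i x
      calc f i x ≤ ∑ j, w i j * f j (c • x) := h i x
        _ ≤ ∑ j, w i j * B (c ^ n • c • x) :=
          Finset.sum_le_sum fun j _ => mul_le_mul_of_nonneg_left (ih j _) (hw0 i j)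
        _ = (∑ j, w i j) * B (c ^ (n + 1) • x) := by rw [Finset.sum_mul, smul_smul, ← pow_succ]
        _ ≤ B (c ^ (n + 1) • x) := mul_le_of_le_one_left (hB _) (hw1 i)
  have hlim : Tendsto (fun n => B (c ^ n • x)) atTop (𝓝 0) := by
    have hpow : Tendsto (fun n => c ^ n • x) atTop (𝓝 0) := by
      simpa using (tendsto_pow_atTop_nhds_zero_of_abs_lt_one hc).smul_const x
    simpa [B, hf0] using tendsto_finsetSum _ fun j _ => ((hf j).tendsto.comp hpow).abs
  exact ge_of_tendsto' hlim fun n => hiter n i x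

lemma measurableSet_unitCube (d : ℕ) : MeasurableSet (unitCube d) := by
  simp only [unitCube, Set.ofPred_forall]
  exact MeasurableSet.iInter fun i => measurableSet_Icc.preimage (measurable_pi_apply i)

section DiscountedReturn

variable {S E : Type*} [NormedAddCommGroup E] [NormedSpace ℝ E] {γ : ℝ}

noncomputable def discountedReturn (γ : ℝ) (φ : S → E) (traj : ℕ → S) : E :=
  ∑' t, γ ^ t • φ (traj t)

lemma summable_pow_smul_comp [Finite S] [CompleteSpace E] (hγ : |γ| < 1) (φ : S → E)
    (traj : ℕ → S) : Summable fun t => γ ^ t • φ (traj t) := by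
  obtain ⟨C, hC⟩ := Finite.exists_le fun s => ‖φ s‖
  refine ((summable_geometric_of_lt_one (abs_nonneg γ) hγ).mul_right C).of_norm_bounded
    fun t => ?_
  rw [norm_smul, norm_pow, Real.norm_eq_abs]
  exact mul_le_mul_of_nonneg_left (hC _) (pow_nonneg (abs_nonneg γ) t)

lemma discountedReturn_eq_add_smul_shift [Finite S] [CompleteSpace E] (hγ : |γ| < 1)
    (φ : S → E) (traj : ℕ → S) :
    discountedReturn γ φ traj = φ (traj 0) + γ • discountedReturn γ φ fun t => traj (t + 1) := by
  rw [discountedReturn, (summable_pow_smul_comp hγ φ traj).tsum_eq_zero_add, discountedReturn,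
    ← (summable_pow_smul_comp hγ φ _).tsum_const_smul]
  simp_rw [pow_zero, one_smul, smul_smul, ← pow_succ']

lemma measurable_discountedReturn [MeasurableSpace S] [MeasurableSingletonClass S] [Finite S]
    [CompleteSpace E] [MeasurableSpace E] [BorelSpace E] [SecondCountableTopology E]
    (hγ : |γ| < 1) (φ : S → E) : Measurable (discountedReturn γ φ) := by
  refine measurable_of_tendsto_metrizable
    (f := fun n traj => ∑ t ∈ Finset.range n, γ ^ t • φ (traj t))
    (fun n => Finset.measurable_sum _ fun t _ =>
      (measurable_of_countable fun s => γ ^ t • φ s).comp (measurable_pi_apply t)) ?_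
  exact tendsto_pi_nhds.mpr fun traj => (summable_pow_smul_comp hγ φ traj).hasSum.tendsto_sum_nat

lemma discountedReturn_mem_unitCube [Finite S] {d : ℕ} (hγ0 : 0 ≤ γ) (hγ1 : γ < 1)
    {φ : S → Fin d → ℝ} (hφ : ∀ s i, φ s i ∈ Set.Icc 0 (1 - γ)) (traj : ℕ → S) :
    discountedReturn γ φ traj ∈ unitCube d := by
  intro i
  have hsum : HasSum (fun t => γ ^ t * φ (traj t) i) (discountedReturn γ φ traj i) :=
    Pi.hasSum.mp (summable_pow_smul_comp (abs_lt.mpr ⟨by linarith, hγ1⟩) φ traj).hasSum i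
  have hgeom : HasSum (fun t => γ ^ t * (1 - γ)) 1 := by
    simpa [inv_mul_cancel₀ (sub_ne_zero.mpr hγ1.ne')] using
      (hasSum_geometric_of_lt_one hγ0 hγ1).mul_right (1 - γ)
  exact ⟨hsum.nonneg fun t => mul_nonneg (pow_nonneg hγ0 t) (hφ _ i).1,
    hasSum_le (fun t => mul_le_mul_of_nonneg_left (hφ _ i).2 (pow_nonneg hγ0 t)) hsum hgeom⟩

end DiscountedReturn

section Bellman

variable {S : Type*} [Fintype S] [MeasurableSpace S] [MeasurableSingletonClass S] {d : ℕ}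
  {γ : ℝ} {φ : S → Fin d → ℝ} {κ : S → Measure S}

lemma charFunDual_Tdist [∀ s, IsFiniteMeasure (κ s)] (p : S → Measure (Fin d → ℝ))
    [∀ s, IsFiniteMeasure (p s)] (s : S) (L : StrongDual ℝ (Fin d → ℝ)) :
    charFunDual (Tdist γ φ κ p s) L
      = ∑ s', (κ s).real {s'} • (charFunDual (p s') (γ • L) * cexp (L (φ s) * I)) := by
  have hsplit : ∀ s', (p s').map (fun ψ => φ s + γ • ψ)
      = ((p s').map (γ • ContinuousLinearMap.id ℝ (Fin d → ℝ))).map (φ s + ·) := fun s' => by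
    rw [Measure.map_map (by fun_prop) (γ • ContinuousLinearMap.id ℝ _).continuous.measurable]
    rfl
  simp_rw [Tdist, charFunDual_bind, hsplit, charFunDual_map_const_add, charFunDual_map,
    ContinuousLinearMap.comp_smul, ContinuousLinearMap.comp_id]

lemma norm_charFunDual_Tdist_sub_le [∀ s, IsFiniteMeasure (κ s)] (q r : S → Measure (Fin d → ℝ))
    [∀ s, IsFiniteMeasure (q s)] [∀ s, IsFiniteMeasure (r s)] (s : S)
    (L : StrongDual ℝ (Fin d → ℝ)) :
    ‖charFunDual (Tdist γ φ κ q s) L - charFunDual (Tdist γ φ κ r s) L‖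
      ≤ ∑ s', (κ s).real {s'} * ‖charFunDual (q s') (γ • L) - charFunDual (r s') (γ • L)‖ := by
  rw [charFunDual_Tdist, charFunDual_Tdist, ← Finset.sum_sub_distrib]
  refine (norm_sum_le _ _).trans_eq (Finset.sum_congr rfl fun s' _ => ?_)
  rw [← smul_sub, ← sub_mul, norm_smul, norm_mul, norm_exp_ofReal_mul_I, mul_one,
    Real.norm_of_nonneg measureReal_nonneg]

lemma eq_of_isFixedPt_Tdist (hγ : |γ| < 1) [∀ s, IsProbabilityMeasure (κ s)]
    {q r : S → Measure (Fin d → ℝ)} [∀ s, IsProbabilityMeasure (q s)]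
    [∀ s, IsProbabilityMeasure (r s)] (hq : IsFixedPt (Tdist γ φ κ) q)
    (hr : IsFixedPt (Tdist γ φ κ) r) : q = r := by
  funext s
  refine Measure.ext_of_charFunDual (funext fun L => ?_)
  set Δ : S → ℝ → ℝ := fun s u => ‖charFun ((q s).map L) u - charFun ((r s).map L) u‖
  have hΔ : ∀ s u, Δ s u ≤ ∑ s', (κ s).real {s'} * Δ s' (γ • u) := fun s u => by
    simp only [Δ, charFun_map_eq_charFunDual_smul, smul_eq_mul, mul_smul]
    conv_lhs => rw [← hq.eq, ← hr.eq]
    exact norm_charFunDual_Tdist_sub_le q r s (u • L)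
  have hΔ0 : ∀ s, Δ s 0 = 0 := fun s => by
    simp [Δ, charFun_zero, measureReal_def, Measure.map_apply L.continuous.measurable]
  have hΔc : ∀ s, ContinuousAt (Δ s) 0 := fun s =>
    (continuous_charFun.sub continuous_charFun).norm.continuousAt
  have hΔ1 := nonpos_of_le_sum_mul_comp_smul hγ (fun _ _ => measureReal_nonneg)
    (fun s => by simp) hΔc hΔ0 hΔ s 1
  rw [charFunDual_eq_charFun_map_one, charFunDual_eq_charFun_map_one,
    ← sub_eq_zero, ← norm_le_zero_iff]
  exact hΔ1

lemma isFixedPt_Tdist_map_discountedReturn (hγ : |γ| < 1) {μ : S → Measure (ℕ → S)}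
    (hstart : ∀ s, μ s {traj | traj 0 = s}ᶜ = 0)
    (hMarkov : ∀ s, (μ s).map (fun traj t => traj (t + 1)) = (κ s).bind μ) :
    IsFixedPt (Tdist γ φ κ) fun s => (μ s).map (discountedReturn γ φ) := by
  refine funext fun s => ?_
  have hR := measurable_discountedReturn hγ φ
  set A : (Fin d → ℝ) → (Fin d → ℝ) := fun ψ => φ s + γ • ψ
  have hA : Measurable A := by fun_prop
  have hshift : Measurable fun (traj : ℕ → S) t => traj (t + 1) := by fun_prop
  calc Tdist γ φ κ (fun s' => (μ s').map (discountedReturn γ φ)) s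
      = ((κ s).bind μ).map (A ∘ discountedReturn γ φ) := by
        rw [Measure.map_bind (measurable_of_countable μ) (hA.comp hR)]
        exact congrArg _ (funext fun s' => Measure.map_map hA hR)
    _ = (μ s).map (A ∘ discountedReturn γ φ ∘ fun traj t => traj (t + 1)) := by
        rw [← hMarkov, Measure.map_map (hA.comp hR) hshift, comp_assoc]
    _ = (μ s).map (discountedReturn γ φ) := Measure.map_congr <| by
        filter_upwards [mem_ae_iff.mpr (hstart s)] with traj (h0 : traj 0 = s)
        rw [comp_apply, comp_apply, discountedReturn_eq_add_smul_shift hγ φ traj, h0]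

end Bellman

/-- The `γ`-contractive distributional Bellman operator has a unique fixed point among
state-indexed probability distributions supported in `[0,1]^d`, and this fixed point
is the law of the discounted feature sum `∑_{t=1}^∞ γ^{t-1} φ(s_t)` under the behavior
policy (whose trajectory measures `μ s` start at `s` and have Markov transitions
`κ`). -/
theorem distributional_bellman_unique_fixed_point
    {S : Type*} [Fintype S] [MeasurableSpace S] [MeasurableSingletonClass S] {d : ℕ}
    (γ : ℝ) (hγ0 : 0 ≤ γ) (hγ1 : γ < 1)
    (φ : S → Fin d → ℝ) (hφ : ∀ s i, φ s i ∈ Set.Icc (0 : ℝ) (1 - γ))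
    (κ : S → Measure S) (hκ : ∀ s, IsProbabilityMeasure (κ s))
    (μ : S → Measure (ℕ → S)) (hμ : ∀ s, IsProbabilityMeasure (μ s))
    (hstart : ∀ s, μ s {traj : ℕ → S | traj 0 = s}ᶜ = 0)
    (hMarkov : ∀ s, (μ s).map (fun traj t => traj (t + 1)) = (κ s).bind μ) :
    ((∀ s, IsProbabilityMeasure ((μ s).map (fun traj => ∑' t : ℕ, γ ^ t • φ (traj t))) ∧
        ((μ s).map (fun traj => ∑' t : ℕ, γ ^ t • φ (traj t))) (unitCube d)ᶜ = 0) ∧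
      ∀ s, Tdist γ φ κ (fun s' => (μ s').map (fun traj => ∑' t : ℕ, γ ^ t • φ (traj t))) s
        = (μ s).map (fun traj => ∑' t : ℕ, γ ^ t • φ (traj t))) ∧
    (∀ p : S → Measure (Fin d → ℝ),
      (∀ s, IsProbabilityMeasure (p s) ∧ p s (unitCube d)ᶜ = 0) →
      (∀ s, Tdist γ φ κ p s = p s) →
      p = fun s => (μ s).map (fun traj => ∑' t : ℕ, γ ^ t • φ (traj t))) := by
  rw [show (fun traj => ∑' t : ℕ, γ ^ t • φ (traj t)) = discountedReturn γ φ from rfl]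
  have hγ : |γ| < 1 := abs_lt.mpr ⟨by linarith, hγ1⟩
  have hR : Measurable (discountedReturn γ φ) := measurable_discountedReturn hγ φ
  have hlaw : ∀ s, IsProbabilityMeasure ((μ s).map (discountedReturn γ φ)) := fun _ =>
    Measure.isProbabilityMeasure_map hR.aemeasurable
  have hcube : ∀ s, (μ s).map (discountedReturn γ φ) (unitCube d)ᶜ = 0 := fun s => by
    rw [Measure.map_apply hR (measurableSet_unitCube d).compl, Set.preimage_compl,
      Set.preimage_eq_univ_iff.mpr (Set.range_subset_iff.mpr
        (discountedReturn_mem_unitCube hγ0 hγ1 hφ)), Set.compl_univ, measure_empty]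
  have hfix := isFixedPt_Tdist_map_discountedReturn (φ := φ) hγ hstart hMarkov
  refine ⟨⟨fun s => ⟨hlaw s, hcube s⟩, congrFun hfix⟩, fun p hp hpfix => ?_⟩
  have := fun s => (hp s).1
  exact eq_of_isFixedPt_Tdist hγ (funext hpfix) hfix
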